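/- arXiv:2207.01304 — 6 statements merged into one kernel-verified Lean document; each statement's English description precedes it below -/
import Mathlib

section
/- Let N be a prime, A an additive abelian group, and L : ℕ → A a function satisfying L(a·b) = L(a) + L(b) whenever a, b are positive integers not divisible by N. For n not divisible by N define E'(n) = ∑_{d ∣ n} d • (2·L(d) − L(n)) ∈ A. Then for every prime ℓ ∉ {N} and every positive integer n not divisible by N: E'(ℓ·n) + (if ℓ ∣ n then ℓ • E'(n/ℓ) else 0) = (ℓ+1) • E'(n) + ((ℓ−1)·σ₁(n)) • L(ℓ), where σ₁(n) = ∑_{d ∣ n} d. -/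
theorem sum_div_mul {M : Type*} [AddCommMonoid M] (g : ℕ → M) {l n : ℕ} (hl : l.Prime) :
    ∑ d ∈ (l*n).divisors, g d
      = ∑ d ∈ n.divisors, g (l*d) + ∑ d ∈ n.divisors.filter (fun d => ¬ l ∣ d), g d := by
  have hset : (l*n).divisors = n.divisors.image (l * ·) ∪ n.divisors.filter (fun d => ¬ l ∣ d) := by
    ext d
    simp only [Finset.mem_union, Finset.mem_image, Finset.mem_filter, Nat.mem_divisors,
      mul_ne_zero_iff]
    constructor
    · rintro ⟨hd, hl0, hn0⟩
      by_cases hld : l ∣ d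
      · obtain ⟨e, rfl⟩ := hld
        exact Or.inl ⟨e, ⟨(mul_dvd_mul_iff_left hl0).mp hd, hn0⟩, rfl⟩
      · exact Or.inr ⟨⟨((Nat.Coprime.dvd_of_dvd_mul_left
          ((hl.coprime_iff_not_dvd.mpr hld).symm) hd)), hn0⟩, hld⟩
    · rintro (⟨e, ⟨he, hn0⟩, rfl⟩ | ⟨⟨hd, hn0⟩, hld⟩)
      · exact ⟨mul_dvd_mul_left l he, hl.ne_zero, hn0⟩
      · exact ⟨hd.mul_left l, hl.ne_zero, hn0⟩
  rw [hset, Finset.sum_union, Finset.sum_image]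
  · intro a _ b _ h
    exact Nat.eq_of_mul_eq_mul_left hl.pos h
  · rw [Finset.disjoint_right]
    intro d hd hd2
    simp only [Finset.mem_filter] at hd
    simp only [Finset.mem_image] at hd2
    obtain ⟨e, _, rfl⟩ := hd2
    exact hd.2 ⟨e, rfl⟩

theorem stmt1 {A : Type*} [AddCommGroup A] (N : ℕ) (hN : N.Prime)
    (L : ℕ → A)
    (hL : ∀ a b : ℕ, 0 < a → 0 < b → ¬ N ∣ a → ¬ N ∣ b → L (a * b) = L a + L b)
    (E : ℕ → A)
    (hE : ∀ n, E n = ∑ d ∈ n.divisors, d • (2 • L d - L n))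
    (ℓ : ℕ) (hℓ : ℓ.Prime) (hℓN : ℓ ≠ N)
    (n : ℕ) (hn : 0 < n) (hnN : ¬ N ∣ n) :
    E (ℓ * n) + (if ℓ ∣ n then ℓ • E (n / ℓ) else 0)
      = (ℓ + 1) • E n + ((ℓ - 1) * ∑ d ∈ n.divisors, d) • L ℓ := by
  have hNl : ¬ N ∣ ℓ := fun h => hℓN ((Nat.prime_dvd_prime_iff_eq hN hℓ).mp h).symm
  have hLmul : ∀ d : ℕ, d ≠ 0 → ¬ N ∣ d → L (ℓ * d) = L ℓ + L d :=
    fun d h0 hNd => hL ℓ d hℓ.pos (Nat.pos_of_ne_zero h0) hNl hNd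
  have hEf : ∀ m : ℕ, E m = 2 • (∑ d ∈ m.divisors, d • L d) - (∑ d ∈ m.divisors, d) • L m := by
    intro m
    rw [hE m, Finset.smul_sum, Finset.sum_smul, ← Finset.sum_sub_distrib]
    exact Finset.sum_congr rfl fun d _ => by rw [smul_sub, smul_comm]
  have keyS : ∀ m : ℕ, (∑ d ∈ (ℓ*m).divisors, d)
      = ℓ * (∑ d ∈ m.divisors, d) + ∑ d ∈ m.divisors.filter (fun d => ¬ ℓ ∣ d), d := by
    intro m
    rw [sum_div_mul (fun d => d) hℓ, Finset.mul_sum]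
  have key : ∀ m : ℕ, 0 < m → ¬ N ∣ m →
      (∑ d ∈ (ℓ*m).divisors, d • L d) = ℓ • (∑ d ∈ m.divisors, d • L d)
        + (ℓ * ∑ d ∈ m.divisors, d) • L ℓ
        + ∑ d ∈ m.divisors.filter (fun d => ¬ ℓ ∣ d), d • L d := by
    intro m hm hNm
    rw [sum_div_mul (fun d => d • L d) hℓ]
    have h1 : ∀ d ∈ m.divisors, (ℓ*d) • L (ℓ*d) = (ℓ*d) • L ℓ + ℓ • (d • L d) := by
      intro d hd'
      have h0 : d ≠ 0 := (Nat.pos_of_mem_divisors hd').ne'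
      have hNd : ¬ N ∣ d := fun h => hNm (h.trans (Nat.dvd_of_mem_divisors hd'))
      rw [hLmul d h0 hNd]; simp [smul_add, mul_smul]
    rw [Finset.sum_congr rfl h1, Finset.sum_add_distrib, ← Finset.sum_smul, ← Finset.mul_sum,
      ← Finset.smul_sum]
    abel
  by_cases hd : ℓ ∣ n
  · obtain ⟨m, rfl⟩ := hd
    have hm : 0 < m := Nat.pos_of_ne_zero (by rintro rfl; simp at hn)
    have hNm : ¬ N ∣ m := fun h => hnN (h.mul_left ℓ)
    have hfil : ((ℓ*m).divisors.filter (fun d => ¬ ℓ ∣ d))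
        = m.divisors.filter (fun d => ¬ ℓ ∣ d) := by
      ext d
      simp only [Finset.mem_filter, Nat.mem_divisors, mul_ne_zero_iff]
      constructor
      · rintro ⟨⟨hdd, _, h0⟩, hld⟩
        exact ⟨⟨(hℓ.coprime_iff_not_dvd.mpr hld).symm.dvd_of_dvd_mul_left hdd, h0⟩, hld⟩
      · rintro ⟨⟨hdd, h0⟩, hld⟩
        exact ⟨⟨hdd.mul_left ℓ, hℓ.ne_zero, h0⟩, hld⟩
    rw [if_pos ⟨m, rfl⟩, Nat.mul_div_cancel_left m hℓ.pos,
      hEf (ℓ*(ℓ*m)), hEf m, hEf (ℓ*m),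
      key (ℓ*m) hn hnN, key m hm hNm, keyS (ℓ*m), keyS m, hfil,
      hLmul (ℓ*m) hn.ne' hnN, hLmul m hm.ne' hNm]
    obtain ⟨k, rfl⟩ : ∃ k, ℓ = k + 1 := ⟨ℓ-1, (Nat.succ_pred_eq_of_pos hℓ.pos).symm⟩
    simp only [Nat.add_sub_cancel]
    module
  · have hfull : n.divisors.filter (fun d => ¬ ℓ ∣ d) = n.divisors :=
      Finset.filter_true_of_mem fun d hdm hld => hd (hld.trans (Nat.dvd_of_mem_divisors hdm))
    rw [if_neg hd, add_zero, hEf (ℓ*n), hEf n, key n hn hnN, keyS n, hfull,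
      hLmul n hn.ne' hnN]
    obtain ⟨k, rfl⟩ : ∃ k, ℓ = k + 1 := ⟨ℓ-1, (Nat.succ_pred_eq_of_pos hℓ.pos).symm⟩
    simp only [Nat.add_sub_cancel]
    module
end

section
/- Let D be an odd squarefree integer with D ≥ 5, and let x, y be odd positive integers with x² − D·y² = 4 and D ∣ x − 2. Then there exist odd positive integers u, v with x + 2 = u², x − 2 = D·v², u² − D·v² = 4, and u < x. -/
/-! Since `x` is odd, `x - 2` and `x + 2` are coprime (their difference is `4`). Writing
`x - 2 = D k` and dividing the Pell equation by `D` gives `k (x + 2) = y ^ 2`, so the coprime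
factors `k` and `x + 2` are both squares, `k = v ^ 2` and `x + 2 = u ^ 2`; then
`u ^ 2 = x + 2 < x ^ 2`. -/

theorem Int.isCoprime_sub_two_add_two_of_odd {x : ℤ} (hx : Odd x) :
    IsCoprime (x - 2) (x + 2) := by
  have h : IsCoprime (x - 2) (2 ^ 2 + (x - 2) * 1) :=
    (Int.isCoprime_two_right.mpr (hx.sub_even even_two)).pow_right.add_mul_left_right 1
  convert h using 1
  ring

theorem Int.exists_pos_sq_of_isCoprime_of_mul_eq_sq {a b c : ℤ} (hab : IsCoprime a b)
    (h : a * b = c ^ 2) (ha : 0 < a) : ∃ u, 0 < u ∧ a = u ^ 2 := by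
  obtain ⟨u, hu | hu⟩ := Int.sq_of_isCoprime hab h
  · have hu0 : u ≠ 0 := by rintro rfl; simp [hu] at ha
    exact ⟨|u|, abs_pos.mpr hu0, by rw [sq_abs, hu]⟩
  · nlinarith [sq_nonneg u]

theorem stmt2_general (D : ℤ) (hD5 : 5 ≤ D)
    (x y : ℤ) (hx : Odd x) (hxpos : 0 < x)
    (hpell : x ^ 2 - D * y ^ 2 = 4) (hdvd : D ∣ x - 2) :
    ∃ u v : ℤ, Odd u ∧ 0 < u ∧ Odd v ∧ 0 < v ∧
      x + 2 = u ^ 2 ∧ x - 2 = D * v ^ 2 ∧ u ^ 2 - D * v ^ 2 = 4 ∧ u < x := by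
  obtain ⟨k, hk⟩ := hdvd
  have hkcop : IsCoprime k (x + 2) :=
    (Int.isCoprime_sub_two_add_two_of_odd hx).of_isCoprime_of_dvd_left (Dvd.intro_left D hk.symm)
  have hprod : k * (x + 2) = y ^ 2 :=
    mul_left_cancel₀ (by positivity : D ≠ 0) (by linear_combination hpell - (x + 2) * hk)
  have hk_odd : Odd k := (Int.odd_mul.mp (hk ▸ hx.sub_even even_two)).2
  have hk_pos : 0 < k := by
    have : 0 ≤ k := nonneg_of_mul_nonneg_left (hprod ▸ sq_nonneg y) (by omega)
    have := Int.odd_iff.mp hk_odd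
    omega
  obtain ⟨u, hu_pos, hu⟩ := Int.exists_pos_sq_of_isCoprime_of_mul_eq_sq hkcop.symm
    (by rw [mul_comm, hprod]) (by omega)
  obtain ⟨v, hv_pos, rfl⟩ := Int.exists_pos_sq_of_isCoprime_of_mul_eq_sq hkcop hprod hk_pos
  have hx_large : 3 ≤ x := by nlinarith
  refine ⟨u, v, ?_, hu_pos, ?_, hv_pos, hu, hk, by linear_combination hk - hu, ?_⟩
  · exact (Int.odd_pow' two_ne_zero).mp (hu ▸ hx.add_even even_two)
  · exact (Int.odd_pow' two_ne_zero).mp hk_odd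
  · nlinarith

theorem stmt2 (D : ℤ) (hDodd : Odd D) (hsf : Squarefree D) (hD5 : 5 ≤ D)
    (x y : ℤ) (hx : Odd x) (hxpos : 0 < x) (hy : Odd y) (hypos : 0 < y)
    (hpell : x ^ 2 - D * y ^ 2 = 4) (hdvd : D ∣ x - 2) :
    ∃ u v : ℤ, Odd u ∧ 0 < u ∧ Odd v ∧ 0 < v ∧
      x + 2 = u ^ 2 ∧ x - 2 = D * v ^ 2 ∧ u ^ 2 - D * v ^ 2 = 4 ∧ u < x :=
  stmt2_general D hD5 x y hx hxpos hpell hdvd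
end

section
/- Let D be an odd squarefree integer with D > 1, and let x, y be integers with x odd, x > 1, x² − D·y² = 1, and D ∣ x − 1. Then there exist positive integers u, v with x + 1 = 2u², x − 1 = 2D·v², and hence u² − D·v² = 1 with u < x. -/
theorem stmt3 (D : ℤ) (hDodd : Odd D) (hsf : Squarefree D) (hD1 : 1 < D)
    (x y : ℤ) (hx : Odd x) (hx1 : 1 < x)
    (hpell : x ^ 2 - D * y ^ 2 = 1) (hdvd : D ∣ x - 1) :
    ∃ u v : ℤ, 0 < u ∧ 0 < v ∧ x + 1 = 2 * u ^ 2 ∧ x - 1 = 2 * D * v ^ 2 ∧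
      u ^ 2 - D * v ^ 2 = 1 ∧ u < x := by
  obtain ⟨k, hk⟩ := hx
  obtain ⟨d, hd⟩ := hDodd
  -- y is even
  have hyev : Even y := by
    by_contra hodd
    have hyo : Odd y := Int.not_even_iff_odd.mp hodd
    obtain ⟨m, hm⟩ := hyo
    have : (2:ℤ) ∣ 1 := by
      refine ⟨2*k^2 + 2*k - (2*d+1)*(2*m^2+2*m) - d, ?_⟩
      have h := hpell
      subst hk hd hm; ring_nf; ring_nf at h; linarith
    norm_num at this
  obtain ⟨w, hw⟩ := hyev
  have hyw : y = 2 * w := by linarith [hw]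
  have hkey : k * (k + 1) = D * w ^ 2 := by
    have h4 : 4 * (k * (k + 1)) = 4 * (D * w ^ 2) := by
      have h := hpell
      rw [hk, hyw] at h; ring_nf; ring_nf at h; linarith
    exact mul_left_cancel₀ (by norm_num : (4:ℤ) ≠ 0) h4
  -- D ∣ k
  have hcop2 : IsCoprime D (2:ℤ) := ⟨1, -d, by rw [hd]; ring⟩
  have hDk : D ∣ k := by
    have h2k : D ∣ 2 * k := by
      have : x - 1 = 2 * k := by rw [hk]; ring
      rwa [this] at hdvd
    exact hcop2.dvd_of_dvd_mul_left h2k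
  obtain ⟨v0, hv0⟩ := hDk
  have hD0 : (0:ℤ) < D := by linarith
  have hkpos : 0 < k := by omega
  have hv0pos : 0 < v0 := by nlinarith
  -- cancel D : v0 * (k+1) = w^2
  have hprod : (k + 1) * v0 = w ^ 2 := by
    have : D * ((k + 1) * v0) = D * w ^ 2 := by rw [← hkey, hv0]; ring
    exact mul_left_cancel₀ (by linarith : D ≠ 0) this
  -- coprimality
  have hckk : IsCoprime k (k + 1) := ⟨-1, 1, by ring⟩
  have hc1 : IsCoprime (k + 1) v0 := by
    have : IsCoprime (D * v0) (k + 1) := by rw [← hv0]; exact hckk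
    exact (IsCoprime.of_mul_left_right this).symm
  obtain ⟨u0, hu0⟩ := Int.sq_of_isCoprime hc1 hprod
  have hu0' : k + 1 = u0 ^ 2 := by
    rcases hu0 with h | h
    · exact h
    · nlinarith [sq_nonneg u0]
  obtain ⟨v1, hv1⟩ := Int.sq_of_isCoprime hc1.symm (by rw [mul_comm]; exact hprod)
  have hv1' : v0 = v1 ^ 2 := by
    rcases hv1 with h | h
    · exact h
    · nlinarith [sq_nonneg v1]
  refine ⟨|u0|, |v1|, ?_, ?_, ?_, ?_, ?_, ?_⟩
  · rcases abs_pos.mpr (show u0 ≠ 0 by rintro rfl; simp at hu0'; omega) with h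
    exact h
  · exact abs_pos.mpr (by rintro rfl; simp at hv1'; omega)
  · rw [hk, sq_abs, ← hu0']; ring
  · rw [hk, sq_abs, ← hv1', hv0]; ring
  · rw [sq_abs, sq_abs, ← hu0', ← hv1', ← hv0]; ring
  · have h1 : |u0| ^ 2 = k + 1 := by rw [sq_abs, hu0']
    have h2 : 0 < |u0| := abs_pos.mpr (by rintro rfl; simp at hu0'; omega)
    nlinarith [h1, h2, hk]
end

section
/- Let x, y be nonzero real numbers. If x·y > 0 then ∫₀^∞ (λx + y/λ)·exp(−π(λ²x² + y²/λ²)) dλ/λ = sign(x)·exp(−2πxy); if x·y < 0 then the integral equals 0. -/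
open Real MeasureTheory Set

/-!
Write `Ψ(u, v) = (u + v) e^{-π(u² + v²)}`, so that the integral is `I(x, y) = ∫₀^∞ Ψ(λx, y/λ) dλ/λ`.
For `x, y > 0`, `u² + v² = (u - v)² + 2uv` with `uv = xy` along the orbit, so the integrand is
`e^{-2πxy}` times the Gaussian `e^{-πt²}` pulled back along `t = λx - y/λ`, a diffeomorphism of
`(0, ∞)` onto `ℝ` with derivative `x + y/λ²`; the Gaussian integral is `1`. Since `Ψ` is odd,
`I(-x, -y) = -I(x, y)`, which gives the sign. For `xy < 0`, the substitution `λ ↦ c/λ` with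
`c = -y/x` preserves `dλ/λ` and, `Ψ` being symmetric and odd, reverses the sign of the integrand.
-/

section ChangeOfVariables

variable {E : Type*} [NormedAddCommGroup E] [NormedSpace ℝ E]

theorem hasDerivAt_mul_sub_div (a b : ℝ) {l : ℝ} (hl : l ≠ 0) :
    HasDerivAt (fun l => a * l - b / l) (a + b / l ^ 2) l := by
  have h := ((hasDerivAt_id' l).const_mul a).fun_sub ((hasDerivAt_inv hl).const_mul b)
  simpa only [mul_one, mul_neg, sub_neg_eq_add, ← div_eq_mul_inv] using h

theorem strictMonoOn_mul_sub_div {a b : ℝ} (ha : 0 < a) (hb : 0 ≤ b) :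
    StrictMonoOn (fun l => a * l - b / l) (Ioi 0) := by
  intro l (hl : 0 < l) m _ hlm
  have : b / m ≤ b / l := div_le_div_of_nonneg_left hb hl hlm.le
  dsimp only
  nlinarith

theorem image_mul_sub_div_Ioi {a b : ℝ} (ha : 0 < a) (hb : 0 < b) :
    (fun l => a * l - b / l) '' Ioi 0 = univ := by
  refine eq_univ_of_forall fun t => ?_
  -- the positive root of `a l² - t l - b = 0`
  set s := √(t ^ 2 + 4 * a * b)
  have hs : s ^ 2 = t ^ 2 + 4 * a * b := sq_sqrt (by positivity)
  have hts : 0 < t + s := by nlinarith [sqrt_nonneg (t ^ 2 + 4 * a * b)]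
  refine ⟨(t + s) / (2 * a), div_pos hts (by positivity), ?_⟩
  field_simp
  linear_combination hs

theorem integral_comp_mul_sub_div_Ioi {a b : ℝ} (ha : 0 < a) (hb : 0 < b) (g : ℝ → E) :
    ∫ l in Ioi 0, (a + b / l ^ 2) • g (a * l - b / l) = ∫ t, g t := by
  have h := integral_image_eq_integral_abs_deriv_smul measurableSet_Ioi
    (fun l (hl : 0 < l) => (hasDerivAt_mul_sub_div a b hl.ne').hasDerivWithinAt)
    (strictMonoOn_mul_sub_div ha hb.le).injOn g
  rw [image_mul_sub_div_Ioi ha hb, Measure.restrict_univ] at h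
  rw [h]
  refine setIntegral_congr_fun measurableSet_Ioi fun l (hl : 0 < l) => ?_
  rw [abs_of_pos (by positivity)]

theorem integral_comp_div_Ioi {c : ℝ} (hc : 0 < c) (g : ℝ → E) :
    ∫ l in Ioi 0, l⁻¹ • g (c / l) = ∫ l in Ioi 0, l⁻¹ • g l := by
  have himage : (fun l => c / l) '' Ioi 0 = Ioi 0 := by
    refine Subset.antisymm (image_subset_iff.2 fun l (hl : 0 < l) => div_pos hc hl)
      fun l (hl : 0 < l) => ⟨c / l, div_pos hc hl, div_div_cancel₀ hc.ne'⟩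
  have hderiv (l : ℝ) (hl : 0 < l) : HasDerivWithinAt (c / ·) (-(c / l ^ 2)) (Ioi 0) l := by
    simpa [div_eq_mul_inv] using ((hasDerivAt_inv hl.ne').const_mul c).hasDerivWithinAt
  have h := integral_image_eq_integral_abs_deriv_smul measurableSet_Ioi hderiv
    (fun l _ m _ (h : c / l = c / m) => by simpa [div_eq_mul_inv, hc.ne'] using h)
    fun l => l⁻¹ • g l
  rw [himage] at h
  rw [h]
  refine setIntegral_congr_fun measurableSet_Ioi fun l (hl : 0 < l) => ?_
  simp only [smul_smul, abs_neg, abs_of_pos (show 0 < c / l ^ 2 by positivity)]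
  congr 1
  field_simp

end ChangeOfVariables

noncomputable def psiInfty (u v : ℝ) : ℝ := (u + v) * exp (-(π * (u ^ 2 + v ^ 2)))

theorem psiInfty_comm (u v : ℝ) : psiInfty u v = psiInfty v u := by
  simp only [psiInfty, add_comm]

theorem psiInfty_neg (u v : ℝ) : psiInfty (-u) (-v) = -psiInfty u v := by
  simp only [psiInfty, neg_sq]
  ring

theorem psiInfty_eq_mul_exp_mul_exp_sub_sq (u v : ℝ) :
    psiInfty u v = exp (-(2 * π * u * v)) * ((u + v) * exp (-(π * (u - v) ^ 2))) := by
  rw [psiInfty, mul_left_comm, ← exp_add]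
  ring_nf

noncomputable def orbitIntegral (x y : ℝ) : ℝ := ∫ l in Ioi 0, psiInfty (l * x) (y / l) / l

theorem orbitIntegral_neg (x y : ℝ) : orbitIntegral (-x) (-y) = -orbitIntegral x y := by
  simp only [orbitIntegral, mul_neg, neg_div, psiInfty_neg, integral_neg]

theorem orbitIntegral_of_pos {x y : ℝ} (hx : 0 < x) (hy : 0 < y) :
    orbitIntegral x y = exp (-(2 * π * x * y)) := by
  have hgauss : ∫ t, exp (-(π * t ^ 2)) = 1 := by
    simpa [div_self pi_ne_zero] using integral_gaussian π
  calc orbitIntegral x y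
      = ∫ l in Ioi 0,
          exp (-(2 * π * x * y)) * ((x + y / l ^ 2) • exp (-(π * (x * l - y / l) ^ 2))) := by
        refine setIntegral_congr_fun measurableSet_Ioi fun l (hl : 0 < l) => ?_
        rw [psiInfty_eq_mul_exp_mul_exp_sub_sq, smul_eq_mul]
        field_simp
    _ = exp (-(2 * π * x * y)) := by
        rw [integral_const_mul, integral_comp_mul_sub_div_Ioi hx hy fun t => exp (-(π * t ^ 2)),
          hgauss, mul_one]

theorem orbitIntegral_of_mul_neg {x y : ℝ} (hxy : x * y < 0) : orbitIntegral x y = 0 := by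
  have hx : x ≠ 0 := left_ne_zero_of_mul hxy.ne
  have hy : y ≠ 0 := right_ne_zero_of_mul hxy.ne
  have hc : 0 < -y / x := by
    rw [show -y / x = -(x * y) / x ^ 2 by field_simp]
    exact div_pos (neg_pos.2 hxy) (by positivity)
  have hflip (l : ℝ) (hl : 0 < l) :
      psiInfty (-y / x / l * x) (y / (-y / x / l)) = -psiInfty (l * x) (y / l) := by
    have hu : -y / x / l * x = -(y / l) := by field_simp
    have hv : y / (-y / x / l) = -(l * x) := by field_simp
    rw [hu, hv, psiInfty_neg, psiInfty_comm]
  have h := integral_comp_div_Ioi hc fun l => psiInfty (l * x) (y / l)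
  rw [setIntegral_congr_fun measurableSet_Ioi fun l hl => by rw [hflip l hl]] at h
  simp only [smul_eq_mul, mul_neg, integral_neg, inv_mul_eq_div] at h
  rw [orbitIntegral]
  linarith

theorem orbitIntegral_of_mul_pos {x y : ℝ} (hxy : 0 < x * y) :
    orbitIntegral x y = sign x * exp (-(2 * π * x * y)) := by
  rcases pos_and_pos_or_neg_and_neg_of_mul_pos hxy with ⟨hx, hy⟩ | ⟨hx, hy⟩
  · rw [orbitIntegral_of_pos hx hy, sign_of_pos hx, one_mul]
  · have h := orbitIntegral_of_pos (neg_pos.2 hx) (neg_pos.2 hy)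
    rw [orbitIntegral_neg, mul_neg, mul_neg, neg_mul, neg_neg, neg_eq_iff_eq_neg] at h
    rw [h, sign_of_neg hx, neg_one_mul]

theorem integral_eq_orbitIntegral (x y : ℝ) :
    ∫ l in Ioi (0 : ℝ), (l * x + y / l) * exp (-(π * (l ^ 2 * x ^ 2 + y ^ 2 / l ^ 2))) / l =
      orbitIntegral x y := by
  simp only [orbitIntegral, psiInfty, mul_pow, div_pow]

theorem stmt10_general (x y : ℝ) :
    (0 < x * y →
      (∫ l in Set.Ioi (0 : ℝ),
          (l * x + y / l) * Real.exp (-(Real.pi * (l ^ 2 * x ^ 2 + y ^ 2 / l ^ 2))) / l)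
        = Real.sign x * Real.exp (-(2 * Real.pi * x * y))) ∧
    (x * y < 0 →
      (∫ l in Set.Ioi (0 : ℝ),
          (l * x + y / l) * Real.exp (-(Real.pi * (l ^ 2 * x ^ 2 + y ^ 2 / l ^ 2))) / l)
        = 0) := by
  rw [integral_eq_orbitIntegral]
  exact ⟨orbitIntegral_of_mul_pos, orbitIntegral_of_mul_neg⟩

theorem stmt10 (x y : ℝ) (hx : x ≠ 0) (hy : y ≠ 0) :
    (0 < x * y →
      (∫ l in Set.Ioi (0 : ℝ),
          (l * x + y / l) * Real.exp (-(Real.pi * (l ^ 2 * x ^ 2 + y ^ 2 / l ^ 2))) / l)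
        = Real.sign x * Real.exp (-(2 * Real.pi * x * y))) ∧
    (x * y < 0 →
      (∫ l in Set.Ioi (0 : ℝ),
          (l * x + y / l) * Real.exp (-(Real.pi * (l ^ 2 * x ^ 2 + y ^ 2 / l ^ 2))) / l)
        = 0) :=
  stmt10_general x y
end

section
/- Let A be a finite abelian group, σ : A → A an automorphism with σ∘σ = id, and Z ≤ A a subgroup fixed pointwise by σ. Let A⁻ = {a·σ(a)⁻¹ : a ∈ A} (a subgroup of A), and assume the index [A : A⁻] equals |Z|. Let C = A/Z and let Z act diagonally on P = {(x,y) ∈ A × A : x·y⁻¹ ∈ A⁻}. Then the map C × C → P/Z sending (I₁Z, I₂Z) to the class of (I₁·I₂, I₁·σ(I₂)) is a well-defined bijection. -/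
theorem stmt12 {A : Type*} [CommGroup A] [Finite A] (σ : A ≃* A)
    (hσ : ∀ a, σ (σ a) = a) (Z : Subgroup A) (hZfix : ∀ z ∈ Z, σ z = z)
    (Am : Subgroup A) (hAm : ∀ x, x ∈ Am ↔ ∃ a, x = a * (σ a)⁻¹)
    (hindex : Am.index = Nat.card Z) :
    ∃ e : (A ⧸ Z) × (A ⧸ Z) ≃
        Quot (fun p q : {p : A × A // p.1 * p.2⁻¹ ∈ Am} =>
          ∃ z ∈ Z, q.1.1 = z * p.1.1 ∧ q.1.2 = z * p.1.2),
      ∀ (I₁ I₂ : A) (h : (I₁ * I₂) * (I₁ * σ I₂)⁻¹ ∈ Am),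
        e (QuotientGroup.mk I₁, QuotientGroup.mk I₂)
          = Quot.mk _ ⟨(I₁ * I₂, I₁ * σ I₂), h⟩ := by
  classical
  set r : {p : A × A // p.1 * p.2⁻¹ ∈ Am} → {p : A × A // p.1 * p.2⁻¹ ∈ Am} → Prop :=
    fun p q => ∃ z ∈ Z, q.1.1 = z * p.1.1 ∧ q.1.2 = z * p.1.2 with hr
  have key : ∀ I₁ I₂ : A, (I₁ * I₂) * (I₁ * σ I₂)⁻¹ ∈ Am := by
    intro I₁ I₂
    rw [hAm]
    refine ⟨I₂, ?_⟩
    apply Additive.ofMul.injective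
    simp only [ofMul_mul, ofMul_inv]
    abel
  -- the map
  let f : (A ⧸ Z) × (A ⧸ Z) → Quot r := fun c =>
    Quotient.liftOn₂ c.1 c.2
      (fun I₁ I₂ => Quot.mk r ⟨(I₁ * I₂, I₁ * σ I₂), key I₁ I₂⟩)
      (by
        intro I₁ I₂ J₁ J₂ h1 h2
        replace h1 := QuotientGroup.leftRel_apply.mp h1
        replace h2 := QuotientGroup.leftRel_apply.mp h2
        apply Quot.sound
        refine ⟨(I₁⁻¹ * J₁) * (I₂⁻¹ * J₂), mul_mem h1 h2, ?_, ?_⟩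
        · show J₁ * J₂ = (I₁⁻¹ * J₁) * (I₂⁻¹ * J₂) * (I₁ * I₂)
          apply Additive.ofMul.injective
          simp only [ofMul_mul, ofMul_inv]
          abel
        · show J₁ * σ J₂ = (I₁⁻¹ * J₁) * (I₂⁻¹ * J₂) * (I₁ * σ I₂)
          have h3 : σ J₂ = σ I₂ * (I₂⁻¹ * J₂) := by
            rw [← hZfix _ h2, ← map_mul, mul_inv_cancel_left]
          rw [h3]
          apply Additive.ofMul.injective
          simp only [ofMul_mul, ofMul_inv]
          abel)
  have hf : ∀ I₁ I₂ : A, f (QuotientGroup.mk I₁, QuotientGroup.mk I₂)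
      = Quot.mk r ⟨(I₁ * I₂, I₁ * σ I₂), key I₁ I₂⟩ := fun _ _ => rfl
  -- surjectivity
  have hsurj : Function.Surjective f := by
    intro q
    induction q using Quot.ind with
    | _ p =>
      obtain ⟨⟨x, y⟩, hxy⟩ := p
      obtain ⟨a, ha⟩ := (hAm _).1 hxy
      simp only at ha
      refine ⟨(QuotientGroup.mk (x * a⁻¹), QuotientGroup.mk a), ?_⟩
      rw [hf]
      have hy : x * a⁻¹ * σ a = y := by
        have h1 : x = a * (σ a)⁻¹ * y := by rw [← ha]; group
        rw [h1]
        apply Additive.ofMul.injective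
        simp only [ofMul_mul, ofMul_inv]
        abel
      congr 1
      exact Subtype.ext (Prod.ext (by group) hy)
  -- an equivalence Quot r ≃ (A ⧸ Z) × Am to count
  have gE : Quot r ≃ (A ⧸ Z) × Am :=
    { toFun := Quot.lift
        (fun p => (QuotientGroup.mk p.1.1, ⟨p.1.1 * p.1.2⁻¹, p.2⟩))
        (by
          rintro ⟨⟨x, y⟩, hxy⟩ ⟨⟨x', y'⟩, hxy'⟩ ⟨z, hz, h1, h2⟩
          simp only at h1 h2 ⊢
          subst h1; subst h2
          refine Prod.ext ?_ (Subtype.ext ?_)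
          · refine (QuotientGroup.eq).2 ?_
            have hzx : x⁻¹ * (z * x) = z := by
              apply Additive.ofMul.injective
              simp only [ofMul_mul, ofMul_inv]
              abel
            rw [hzx]; exact hz
          · show x * y⁻¹ = z * x * (z * y)⁻¹
            apply Additive.ofMul.injective
            simp only [ofMul_mul, ofMul_inv]
            abel)
      invFun := fun c =>
        Quotient.liftOn c.1
          (fun x => Quot.mk r ⟨(x, (c.2 : A)⁻¹ * x), by
            show x * ((c.2 : A)⁻¹ * x)⁻¹ ∈ Am
            have : x * ((c.2 : A)⁻¹ * x)⁻¹ = (c.2 : A) := by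
              apply Additive.ofMul.injective
              simp only [ofMul_mul, ofMul_inv]
              abel
            rw [this]; exact c.2.2⟩)
          (by
            intro x x' hxx
            replace hxx := QuotientGroup.leftRel_apply.mp hxx
            apply Quot.sound
            refine ⟨x⁻¹ * x', hxx, ?_, ?_⟩
            · show x' = x⁻¹ * x' * x
              apply Additive.ofMul.injective
              simp only [ofMul_mul, ofMul_inv]
              abel
            · show (c.2 : A)⁻¹ * x' = x⁻¹ * x' * ((c.2 : A)⁻¹ * x)
              apply Additive.ofMul.injective
              simp only [ofMul_mul, ofMul_inv]
              abel)
      left_inv := by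
        intro q
        induction q using Quot.ind with
        | _ p =>
          obtain ⟨⟨x, y⟩, hxy⟩ := p
          refine Quot.sound ⟨1, one_mem _, ?_, ?_⟩
          · show x = 1 * x
            rw [one_mul]
          · show y = 1 * ((x * y⁻¹)⁻¹ * x)
            apply Additive.ofMul.injective
            simp only [ofMul_mul, ofMul_inv, ofMul_one]
            abel
      right_inv := by
        rintro ⟨c, m⟩
        induction c using QuotientGroup.induction_on with
        | _ x =>
          refine Prod.ext rfl (Subtype.ext ?_)
          show x * ((m : A)⁻¹ * x)⁻¹ = (m : A)
          apply Additive.ofMul.injective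
          simp only [ofMul_mul, ofMul_inv]
          abel }
  -- cardinalities
  have hZpos : 0 < Nat.card Z := Nat.card_pos
  have hcardA : Nat.card A = Nat.card (A ⧸ Z) * Nat.card Z :=
    Subgroup.card_eq_card_quotient_mul_card_subgroup Z
  have hcardAm : Nat.card Am * Nat.card Z = Nat.card A := by
    rw [← hindex]; exact Subgroup.card_mul_index Am
  have hAmQ : Nat.card Am = Nat.card (A ⧸ Z) :=
    Nat.eq_of_mul_eq_mul_right hZpos (hcardAm.trans hcardA)
  have hcards : Nat.card ((A ⧸ Z) × (A ⧸ Z)) = Nat.card (Quot r) := by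
    rw [Nat.card_congr gE, Nat.card_prod, Nat.card_prod, hAmQ]
  have hbij : Function.Bijective f := by
    rw [Nat.bijective_iff_surjective_and_card]
    exact ⟨hsurj, hcards⟩
  exact ⟨Equiv.ofBijective f hbij, fun I₁ I₂ h => hf I₁ I₂⟩
end

section
/- Let R be a commutative ring, S a commutative R-algebra, χ : S → R an R-algebra homomorphism, and δ : S → R an R-linear map satisfying δ(s·s') = χ(s)·δ(s') + δ(s)·χ(s') for all s, s' ∈ S. Let M, N be S-modules with R-linear maps f, f₁ : M → R and g, g₁ : N → R satisfying: f(s•m) = χ(s)f(m), g(s•n) = χ(s)g(n), f₁(s•m) = χ(s)f₁(m) + δ(s)f(m), and g₁(s•n) = χ(s)g₁(n) + δ(s)g(n). Then there is an R-linear map h : M ⊗_S N → R with h(m ⊗ n) = f(m)·g₁(n) + f₁(m)·g(n). -/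
open TensorProduct

theorem stmt15 {R S M N : Type*} [CommRing R] [CommRing S] [Algebra R S]
    [AddCommGroup M] [Module R M] [Module S M] [IsScalarTower R S M]
    [AddCommGroup N] [Module R N] [Module S N] [IsScalarTower R S N]
    (χ : S →ₐ[R] R) (δ : S →ₗ[R] R)
    (hδ : ∀ s s' : S, δ (s * s') = χ s * δ s' + δ s * χ s')
    (f f₁ : M →ₗ[R] R) (g g₁ : N →ₗ[R] R)
    (hf : ∀ (s : S) (m : M), f (s • m) = χ s * f m)
    (hg : ∀ (s : S) (n : N), g (s • n) = χ s * g n)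
    (hf₁ : ∀ (s : S) (m : M), f₁ (s • m) = χ s * f₁ m + δ s * f m)
    (hg₁ : ∀ (s : S) (n : N), g₁ (s • n) = χ s * g₁ n + δ s * g n) :
    ∃ h : M ⊗[S] N →ₗ[R] R,
      ∀ (m : M) (n : N), h (m ⊗ₜ[S] n) = f m * g₁ n + f₁ m * g n := by
  let B : M →+ N →+ R :=
    AddMonoidHom.mk' (fun m => AddMonoidHom.mk'
      (fun n => f m * g₁ n + f₁ m * g n)
      (fun n n' => by simp [mul_add]; ring))
      (fun m m' => by ext n; simp [add_mul]; ring)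
  have hB : ∀ (s : S) (m : M) (n : N), B (s • m) n = B m (s • n) := by
    intro s m n
    simp only [B, AddMonoidHom.mk'_apply, hf, hg, hf₁, hg₁]
    ring
  let h0 : M ⊗[S] N →+ R := TensorProduct.liftAddHom B hB
  have h0t : ∀ (m : M) (n : N), h0 (m ⊗ₜ[S] n) = f m * g₁ n + f₁ m * g n :=
    fun m n => rfl
  have hs : ∀ (r : R) (x : M ⊗[S] N), h0 (r • x) = r * h0 x := by
    intro r x
    induction x using TensorProduct.induction_on with
    | zero => simp
    | tmul m n =>
        rw [smul_tmul', h0t, h0t, map_smul, map_smul, smul_eq_mul, smul_eq_mul]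
        ring
    | add x y hx hy => rw [smul_add, map_add, map_add, hx, hy, mul_add]
  exact ⟨{ toFun := h0, map_add' := h0.map_add, map_smul' := hs }, fun m n => rfl⟩
end
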